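/- Let (R, m) be a commutative noetherian local ring, I an ideal of R and M an R-module. Then Ext^1_R(R/I, M) = 0 if and only if M is I-excellent and the canonical R-linear map σ : M → Hom_R(I, I•M), defined by σ(x)(r) = r•x, is surjective. -/

import Mathlib

open CategoryTheory

/-- The canonical map `σ : M → Hom_R(I, I•M)`, `σ(x)(r) = r • x`. -/
noncomputable def sigmaMap {R : Type u} [CommRing R] (I : Ideal R) (M : Type v)
    [AddCommGroup M] [Module R M] :
    M →ₗ[R] (I →ₗ[R] ↥(I • (⊤ : Submodule R M))) where
  toFun x :=
    { toFun := fun r => ⟨(r : R) • x, Submodule.smul_mem_smul r.2 Submodule.mem_top⟩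
      map_add' := by
        intro r s
        apply Subtype.ext
        simp [add_smul]
      map_smul' := by
        intro c r
        apply Subtype.ext
        simp [mul_smul] }
  map_add' := by
    intro x y
    ext r
    simp [smul_add]
  map_smul' := by
    intro c x
    refine LinearMap.ext fun r => Subtype.ext ?_
    simpa using smul_comm (r : R) c x

/-!
Extend the presentation `R^(I) → R → R/I → 0` by syzygies to a projective resolution. Then
`Ext¹_R(R/I, M) = 0` says that every map `R^(I) → M` vanishing on the relations among the elements
of `I` factors through `R`, i.e. that every `f : I → M` has the form `i ↦ i • x`. Such maps take
values in `I • M`, which gives `I`-excellence, and applied to maps `I → I • M` the property is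
surjectivity of `σ`. Conversely, `I`-excellence puts the range of every `f : I → M` into `I • M`,
where surjectivity of `σ` writes `f` as `i ↦ i • x`.
-/

open Limits

universe v u

namespace CategoryTheory

variable {C : Type u} [Category.{v} C] [Abelian C] [EnoughProjectives C]

theorem Projective.d_comp {X Y : C} (f : X ⟶ Y) : Projective.d f ≫ f = 0 :=
  (Category.assoc _ _ _).trans (by rw [kernel.condition]; exact comp_zero)

theorem Projective.d_comp_eq_zero_iff {X Y W : C} (f : X ⟶ Y) (φ : X ⟶ W) :
    Projective.d f ≫ φ = 0 ↔ kernel.ι f ≫ φ = 0 := by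
  change (Projective.π (kernel f) ≫ kernel.ι f) ≫ φ = 0 ↔ _
  rw [Category.assoc, ← cancel_epi (Projective.π (kernel f)), comp_zero]

namespace ProjectiveResolution

variable {Z P₀ P₁ : C} (d : P₁ ⟶ P₀)

/-- `P₁ → P₀` continued to the left by syzygies. -/
noncomputable def ofPresentationComplex : ChainComplex C ℕ :=
  ChainComplex.mk' P₀ P₁ d fun f => ⟨_, Projective.d f, Projective.d_comp f⟩

theorem ofPresentationComplex_d_1_0 : (ofPresentationComplex d).d 1 0 = d := by
  simp [ofPresentationComplex]

theorem ofPresentationComplex_d_2_1 : (ofPresentationComplex d).d 2 1 = Projective.d d :=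
  ChainComplex.mk_d_2_1 ..

theorem ofPresentationComplex_exactAt_succ (n : ℕ) : (ofPresentationComplex d).ExactAt (n + 1) := by
  rw [HomologicalComplex.exactAt_iff' _ (n + 1 + 1) (n + 1) n (by simp) (by simp)]
  refine (ShortComplex.exact_iff_of_iso ?_).2 (exact_d_f ((ofPresentationComplex d).d (n + 1) n))
  exact ShortComplex.isoMk
    (ChainComplex.mk'XIso P₀ P₁ d (fun f => ⟨_, Projective.d f, Projective.d_comp f⟩) n)
    (Iso.refl _) (Iso.refl _)
    ((ChainComplex.mk'_d P₀ P₁ d _ n).symm.trans (Category.comp_id _).symm)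
    ((Category.id_comp _).trans (Category.comp_id _).symm)

instance [Projective P₀] [Projective P₁] (n : ℕ) : Projective ((ofPresentationComplex d).X n) := by
  obtain (_ | _ | _ | n) := n
  · exact ‹Projective P₀›
  · exact ‹Projective P₁›
  all_goals apply Projective.projective_over

noncomputable def ofPresentation [Projective P₀] [Projective P₁] (p : P₀ ⟶ Z) [Epi p]
    (w : d ≫ p = 0) (hexact : (ShortComplex.mk d p w).Exact) : ProjectiveResolution Z where
  complex := ofPresentationComplex d
  π := (ChainComplex.toSingle₀Equiv _ _).symm ⟨p, by rw [ofPresentationComplex_d_1_0]; exact w⟩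
  quasiIso := ⟨fun n => by
    cases n
    · rw [ChainComplex.quasiIsoAt₀_iff, ShortComplex.quasiIso_iff_of_zeros']
      · refine (ShortComplex.exact_and_epi_g_iff_of_iso ?_).2 ⟨hexact, ‹Epi p›⟩
        exact ShortComplex.isoMk (Iso.refl _) (Iso.refl _) (Iso.refl _)
          ((Category.id_comp _).trans
            ((ofPresentationComplex_d_1_0 d).symm.trans (Category.comp_id _).symm))
          ((Category.id_comp _).trans
            ((ChainComplex.toSingle₀Equiv_symm_apply_f_zero
              (C := ofPresentationComplex d) p _).symm.trans (Category.comp_id _).symm))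
      all_goals rfl
    · rw [quasiIsoAt_iff_exactAt']
      · apply ofPresentationComplex_exactAt_succ
      · apply ChainComplex.exactAt_succ_single_obj⟩

variable {R : Type*} [Ring R] [Linear R C]

theorem isZero_ext_one_iff (P : ProjectiveResolution Z) (Y : C) :
    IsZero (((Ext R C 1).obj (Opposite.op Z)).obj Y) ↔
      ∀ φ : P.complex.X 1 ⟶ Y, P.complex.d 2 1 ≫ φ = 0 →
        ∃ ψ : P.complex.X 0 ⟶ Y, P.complex.d 1 0 ≫ ψ = φ := by
  rw [(P.isoExt 1 Y).isZero_iff, ← HomologicalComplex.exactAt_iff_isZero_homology,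
    HomologicalComplex.exactAt_iff' _ 0 1 2 (by simp) (by simp),
    ShortComplex.moduleCat_exact_iff]
  rfl

theorem isZero_ext_one_iff_of_presentation [Projective P₀] [Projective P₁] (p : P₀ ⟶ Z) [Epi p]
    (w : d ≫ p = 0) (hexact : (ShortComplex.mk d p w).Exact) (Y : C) :
    IsZero (((Ext R C 1).obj (Opposite.op Z)).obj Y) ↔
      ∀ φ : P₁ ⟶ Y, kernel.ι d ≫ φ = 0 → ∃ ψ : P₀ ⟶ Y, d ≫ ψ = φ := by
  have h₂₁ : (ofPresentation d p w hexact).complex.d 2 1 = Projective.d d :=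
    ofPresentationComplex_d_2_1 d
  have h₁₀ : (ofPresentation d p w hexact).complex.d 1 0 = d :=
    ofPresentationComplex_d_1_0 d
  rw [(ofPresentation d p w hexact).isZero_ext_one_iff Y]
  refine forall_congr' fun φ => ?_
  rw [h₂₁, h₁₀]
  exact imp_congr (Projective.d_comp_eq_zero_iff d φ) Iff.rfl

end ProjectiveResolution

end CategoryTheory

theorem LinearMap.exists_comp_eq_of_ker_le {R M N P : Type*} [Ring R] [AddCommGroup M]
    [Module R M] [AddCommGroup N] [Module R N] [AddCommGroup P] [Module R P]
    {T : M →ₗ[R] N} (hT : Function.Surjective T) {φ : M →ₗ[R] P} (h : ker T ≤ ker φ) :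
    ∃ f : N →ₗ[R] P, f ∘ₗ T = φ :=
  ⟨(ker T).liftQ φ h ∘ₗ (T.quotKerEquivOfSurjective hT).symm, by
    ext v
    simp [LinearMap.quotKerEquivOfSurjective_symm_apply]⟩

namespace ModuleCat

theorem kernel_ι_comp_eq_zero_iff {R : Type u} [Ring R] {M N L : ModuleCat.{v} R} (f : M ⟶ N)
    (g : M ⟶ L) : kernel.ι f ≫ g = 0 ↔ LinearMap.ker f.hom ≤ LinearMap.ker g.hom := by
  rw [← kernelIsoKer_hom_ker_subtype, Category.assoc, Preadditive.IsIso.comp_left_eq_zero,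
    LinearMap.le_ker_iff_comp_subtype_eq_zero, ← hom_ofHom (LinearMap.ker f.hom).subtype,
    ← hom_comp, ModuleCat.hom_ext_iff, hom_zero]

end ModuleCat

namespace Ideal

variable {R : Type u} [CommRing R] (I : Ideal R)

theorem isZero_ext_one_quotient_iff_of_surjective {F : Type u} [AddCommGroup F] [Module R F]
    [Module.Projective R F] {T : F →ₗ[R] I} (hT : Function.Surjective T)
    (M : Type u) [AddCommGroup M] [Module R M] :
    IsZero (((Ext R (ModuleCat.{u} R) 1).obj
        (Opposite.op (ModuleCat.of R (R ⧸ I)))).obj (ModuleCat.of R M)) ↔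
      ∀ φ : F →ₗ[R] M, LinearMap.ker T ≤ LinearMap.ker φ →
        ∃ ψ : R →ₗ[R] M, ψ ∘ₗ I.subtype ∘ₗ T = φ := by
  let d : ModuleCat.of R F ⟶ ModuleCat.of R R := ModuleCat.ofHom (I.subtype ∘ₗ T)
  let p : ModuleCat.of R R ⟶ ModuleCat.of R (R ⧸ I) := ModuleCat.ofHom I.mkQ
  have : Epi p := (ModuleCat.epi_iff_surjective _).mpr I.mkQ_surjective
  have w : d ≫ p = 0 := by ext v; simp [d, p, Quotient.eq_zero_iff_mem]
  have hexact : (ShortComplex.mk d p w).Exact := by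
    rw [ShortComplex.moduleCat_exact_iff_range_eq_ker]
    simp [d, p, LinearMap.range_comp_of_range_eq_top _ (LinearMap.range_eq_top.mpr hT)]
  have hker : LinearMap.ker d.hom = LinearMap.ker T :=
    LinearMap.ker_comp_of_ker_eq_bot _ I.ker_subtype
  rw [ProjectiveResolution.isZero_ext_one_iff_of_presentation d p w hexact]
  simp only [ModuleCat.kernel_ι_comp_eq_zero_iff, hker]
  refine ⟨fun h φ hφ => ?_, fun h φ hφ => ?_⟩
  · obtain ⟨ψ, hψ⟩ := h (ModuleCat.ofHom φ) hφ
    exact ⟨ψ.hom, congr(ModuleCat.Hom.hom $hψ)⟩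
  · obtain ⟨ψ, hψ⟩ := h φ.hom hφ
    exact ⟨ModuleCat.ofHom ψ, ModuleCat.hom_ext hψ⟩

theorem isZero_ext_one_quotient_iff (M : Type u) [AddCommGroup M] [Module R M] :
    IsZero (((Ext R (ModuleCat.{u} R) 1).obj
        (Opposite.op (ModuleCat.of R (R ⧸ I)))).obj (ModuleCat.of R M)) ↔
      ∀ f : I →ₗ[R] M, ∃ x : M, ∀ i : I, f i = (i : R) • x := by
  have hT := Finsupp.linearCombination_id_surjective R I
  rw [I.isZero_ext_one_quotient_iff_of_surjective hT]
  constructor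
  · intro h f
    obtain ⟨ψ, hψ⟩ := h (f ∘ₗ Finsupp.linearCombination R id) (LinearMap.ker_le_ker_comp _ f)
    refine ⟨ψ 1, fun i => ?_⟩
    calc f i = ψ ((i : R) • 1) := by simpa using congr($hψ (Finsupp.single i 1)).symm
      _ = (i : R) • ψ 1 := ψ.map_smul _ _
  · intro h φ hφ
    obtain ⟨f, rfl⟩ := LinearMap.exists_comp_eq_of_ker_le hT hφ
    obtain ⟨x, hx⟩ := h f
    exact ⟨LinearMap.toSpanSingleton R M x, by ext v; simp [hx]⟩

end Ideal

section

variable {R : Type*} [CommRing R] (I : Ideal R) (M : Type*) [AddCommGroup M] [Module R M]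

theorem Submodule.smul_top_le_iSup_range :
    I • (⊤ : Submodule R M) ≤ ⨆ f : I →ₗ[R] M, LinearMap.range f := by
  rw [Submodule.smul_le]
  intro r hr m _
  exact Submodule.mem_iSup_of_mem ((LinearMap.toSpanSingleton R M m) ∘ₗ I.subtype) ⟨⟨r, hr⟩, rfl⟩

theorem forall_exists_smul_iff_iExcellent_and_sigmaMap_surjective :
    (∀ f : I →ₗ[R] M, ∃ x : M, ∀ i : I, f i = (i : R) • x) ↔
      (I • (⊤ : Submodule R M) = ⨆ f : I →ₗ[R] M, LinearMap.range f) ∧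
        Function.Surjective (sigmaMap I M) := by
  constructor
  · intro h
    refine ⟨(Submodule.smul_top_le_iSup_range I M).antisymm (iSup_le fun f => ?_), fun g => ?_⟩
    · rintro _ ⟨i, rfl⟩
      obtain ⟨x, hx⟩ := h f
      exact hx i ▸ Submodule.smul_mem_smul i.2 Submodule.mem_top
    · obtain ⟨x, hx⟩ := h ((I • ⊤ : Submodule R M).subtype ∘ₗ g)
      exact ⟨x, LinearMap.ext fun i => Subtype.ext (hx i).symm⟩
  · rintro ⟨hexcellent, hsurj⟩ f
    have hrange : LinearMap.range f ≤ I • ⊤ :=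
      hexcellent ▸ le_iSup (fun f => LinearMap.range f) f
    obtain ⟨x, hx⟩ := hsurj (f.codRestrict _ fun i => hrange ⟨i, rfl⟩)
    exact ⟨x, fun i => congr(Subtype.val ($hx i)).symm⟩

end

theorem ext_vanishing_iff_iExcellent_and_sigma_surjective_general
    {R : Type u} [CommRing R]
    (I : Ideal R) (M : Type u) [AddCommGroup M] [Module R M] :
    Subsingleton (((Ext R (ModuleCat.{u} R) 1).obj
        (Opposite.op (ModuleCat.of R (R ⧸ I)))).obj (ModuleCat.of R M)) ↔
      ((I • (⊤ : Submodule R M) = ⨆ f : I →ₗ[R] M, LinearMap.range f) ∧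
        Function.Surjective (sigmaMap I M)) := by
  rw [← ModuleCat.isZero_iff_subsingleton, I.isZero_ext_one_quotient_iff M,
    forall_exists_smul_iff_iExcellent_and_sigmaMap_surjective]

/-- Proposition 1.6: `Ext¹_R(R/I, M) = 0` iff `M` is `I`-excellent (`I•M = γ_I(M)`) and the
canonical map `σ : M → Hom_R(I, I•M)` is surjective. -/
theorem ext_vanishing_iff_iExcellent_and_sigma_surjective
    {R : Type u} [CommRing R] [IsNoetherianRing R] [IsLocalRing R]
    (I : Ideal R) (M : Type u) [AddCommGroup M] [Module R M] :
    Subsingleton (((Ext R (ModuleCat.{u} R) 1).obj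
        (Opposite.op (ModuleCat.of R (R ⧸ I)))).obj (ModuleCat.of R M)) ↔
      ((I • (⊤ : Submodule R M) = ⨆ f : I →ₗ[R] M, LinearMap.range f) ∧
        Function.Surjective (sigmaMap I M)) :=
  ext_vanishing_iff_iExcellent_and_sigma_surjective_general I M
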